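/- arXiv:0804.3242 — 3 statements merged into one kernel-verified Lean document; each statement's English description precedes it below -/
import Mathlib

section
/- Let C be a class of groups that is closed under isomorphism, under taking subgroups, under taking quotients, and under finite (binary) products. Let Γ be a group such that for every element g ∈ Γ of infinite order the centraliser of g in Γ lies in C. Suppose G is a subgroup of finite index in Γ which is generated by two subgroups H₁ and H₂ that commute elementwise (i.e., h₁h₂ = h₂h₁ for all h₁ ∈ H₁ and h₂ ∈ H₂), and suppose each of H₁ and H₂ contains an element of infinite order. Then Γ contains a subgroup of finite index that lies in C (namely G itself lies in C). -/
/-!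
Each `Hᵢ` centralises an element of infinite order of the other one, so it lies in `C`.
Since `H₁` and `H₂` commute elementwise, multiplication `H₁ × H₂ → Γ` is a homomorphism
with image `H₁ ⊔ H₂ = G`, so `G` is a quotient of `H₁ × H₂ ∈ C`.
-/

theorem class_of_le (C : (G : Type u) → [Group G] → Prop)
    (hiso : ∀ (G H : Type u) [Group G] [Group H], (G ≃* H) → C G → C H)
    (hsub : ∀ (G : Type u) [Group G] (H : Subgroup G), C G → C H)
    {Γ : Type u} [Group Γ] {H K : Subgroup Γ} (hHK : H ≤ K) (hK : C K) : C H :=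
  hiso _ _ (Subgroup.subgroupOfEquivOfLe hHK) (hsub _ _ hK)

theorem class_range (C : (G : Type u) → [Group G] → Prop)
    (hiso : ∀ (G H : Type u) [Group G] [Group H], (G ≃* H) → C G → C H)
    (hquot : ∀ (G : Type u) [Group G] (N : Subgroup G) [N.Normal], C G → C (G ⧸ N))
    {A B : Type u} [Group A] [Group B] (f : A →* B) (hA : C A) : C f.range :=
  hiso _ _ (QuotientGroup.quotientKerEquivRange f) (hquot _ _ hA)

theorem class_sup_of_commute (C : (G : Type u) → [Group G] → Prop)
    (hiso : ∀ (G H : Type u) [Group G] [Group H], (G ≃* H) → C G → C H)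
    (hquot : ∀ (G : Type u) [Group G] (N : Subgroup G) [N.Normal], C G → C (G ⧸ N))
    (hprod : ∀ (G H : Type u) [Group G] [Group H], C G → C H → C (G × H))
    {Γ : Type u} [Group Γ] {H₁ H₂ : Subgroup Γ}
    (hcomm : ∀ h₁ ∈ H₁, ∀ h₂ ∈ H₂, h₁ * h₂ = h₂ * h₁) (hC₁ : C H₁) (hC₂ : C H₂) :
    C ↥(H₁ ⊔ H₂) := by
  have hcomm' : ∀ (x : H₁) (y : H₂), Commute (H₁.subtype x) (H₂.subtype y) :=
    fun x y ↦ hcomm x x.2 y y.2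
  have hrange : (MonoidHom.noncommCoprod _ _ hcomm').range = H₁ ⊔ H₂ := by
    rw [MonoidHom.noncommCoprod_range, Subgroup.range_subtype, Subgroup.range_subtype]
  exact hrange ▸ class_range C hiso hquot _ (hprod _ _ hC₁ hC₂)

/-- If `C` is a class of groups closed under isomorphism, subgroups,
quotients, and binary products, `Γ` is a group whose centralisers of infinite-order
elements lie in `C`, and `G` is a finite-index subgroup of `Γ` generated by two
elementwise-commuting subgroups `H₁`, `H₂`, each containing an element of infinite
order, then `Γ` contains a finite-index subgroup lying in `C` (namely `G` itself). -/
theorem fundamental_class_aspherical_group_core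
    (C : (G : Type u) → [inst : Group G] → Prop)
    (hiso : ∀ (G H : Type u) [Group G] [Group H], (G ≃* H) → C G → C H)
    (hsub : ∀ (G : Type u) [Group G] (H : Subgroup G), C G → C H)
    (hquot : ∀ (G : Type u) [Group G] (N : Subgroup G) [N.Normal], C G → C (G ⧸ N))
    (hprod : ∀ (G H : Type u) [Group G] [Group H], C G → C H → C (G × H))
    {Γ : Type u} [Group Γ]
    (hcent : ∀ g : Γ, ¬ IsOfFinOrder g → C (Subgroup.centralizer {g}))
    (G H₁ H₂ : Subgroup Γ) (hfi : G.FiniteIndex)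
    (hgen : H₁ ⊔ H₂ = G)
    (hcomm : ∀ h₁ ∈ H₁, ∀ h₂ ∈ H₂, h₁ * h₂ = h₂ * h₁)
    (h1 : ∃ h ∈ H₁, ¬ IsOfFinOrder h)
    (h2 : ∃ h ∈ H₂, ¬ IsOfFinOrder h) :
    C G ∧ ∃ K : Subgroup Γ, K.FiniteIndex ∧ C K := by
  obtain ⟨a, ha, ha_inf⟩ := h1
  obtain ⟨b, hb, hb_inf⟩ := h2
  have hC₁ : C H₁ := class_of_le C hiso hsub
    (fun x hx ↦ Subgroup.mem_centralizer_singleton_iff.2 (hcomm x hx b hb)) (hcent b hb_inf)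
  have hC₂ : C H₂ := class_of_le C hiso hsub
    (fun y hy ↦ Subgroup.mem_centralizer_singleton_iff.2 (hcomm a ha y hy).symm) (hcent a ha_inf)
  have hCG : C G := hgen ▸ class_sup_of_commute C hiso hquot hprod hcomm hC₁ hC₂
  exact ⟨hCG, G, hfi, hCG⟩
end

section
/- Let Γ be a group containing an element of infinite order, and suppose that for every element g ∈ Γ of infinite order the centraliser of g in Γ is amenable. Let G be a subgroup of finite index in Γ that is generated by two subgroups H₁ and H₂ which commute elementwise (i.e., h₁h₂ = h₂h₁ for all h₁ ∈ H₁ and h₂ ∈ H₂). Then at least one of the groups H₁ and H₂ is amenable. -/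
/-!
Some power `x = g ^ n` of an element `g` of infinite order lies in the finite-index subgroup
`G = H₁ ⊔ H₂`, and still has infinite order. Since `H₁` and `H₂` commute, `x = a * b` with
`a ∈ H₁`, `b ∈ H₂` commuting, so one of `a`, `b` has infinite order; if it is `a`, then `H₂`
lies in the amenable centraliser of `a`, and subgroups of amenable groups are amenable
(symmetrically for `b`).
-/

/-- A real-valued function on a group is bounded. -/
def IsBoundedFun {G : Type*} (f : G → ℝ) : Prop :=
  ∃ M : ℝ, ∀ x : G, |f x| ≤ M

/-- A group `G` is amenable if there is a left-invariant mean on the bounded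
functions `B(G,ℝ)`: a linear, `G`-invariant map `m` with
`inf f ≤ m f ≤ sup f` for every bounded `f`. -/
def IsAmenable (G : Type*) [Group G] : Prop :=
  ∃ m : (G → ℝ) → ℝ,
    (∀ f g : G → ℝ, IsBoundedFun f → IsBoundedFun g → m (f + g) = m f + m g) ∧
    (∀ (c : ℝ) (f : G → ℝ), IsBoundedFun f → m (c • f) = c * m f) ∧
    (∀ (g : G) (f : G → ℝ), IsBoundedFun f → m (fun x => f (g⁻¹ * x)) = m f) ∧
    (∀ f : G → ℝ, IsBoundedFun f → sInf (Set.range f) ≤ m f ∧ m f ≤ sSup (Set.range f))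

theorem IsBoundedFun.comp {α β : Type*} {f : β → ℝ} (hf : IsBoundedFun f) (ψ : α → β) :
    IsBoundedFun (f ∘ ψ) :=
  let ⟨M, hM⟩ := hf
  ⟨M, fun x => hM (ψ x)⟩

namespace IsAmenable

variable {H K : Type*} [Group H] [Group K]

theorem of_surjective_of_map_mul_left (hK : IsAmenable K) (φ : H → K) (ψ : K → H)
    (hψ : Function.Surjective ψ) (hψφ : ∀ (h : H) (x : K), ψ (φ h * x) = h * ψ x) :
    IsAmenable H := by
  obtain ⟨m, m_add, m_smul, m_inv, m_bdd⟩ := hK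
  refine ⟨fun f => m (f ∘ ψ), fun f g hf hg => m_add _ _ (hf.comp ψ) (hg.comp ψ),
    fun c f hf => m_smul c _ (hf.comp ψ), fun g f hf => ?_, fun f hf => ?_⟩
  · have htrans : (fun y => f (g⁻¹ * y)) ∘ ψ = fun x => (f ∘ ψ) ((φ g⁻¹)⁻¹⁻¹ * x) := by
      funext x
      simp only [Function.comp_apply, inv_inv, hψφ]
    exact (congrArg m htrans).trans (m_inv _ _ (hf.comp ψ))
  · simpa only [hψ.range_comp f] using m_bdd (f ∘ ψ) (hf.comp ψ)

theorem of_injective (hK : IsAmenable K) (φ : H →* K) (hφ : Function.Injective φ) :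
    IsAmenable H := by
  -- `ψ` writes `x = φ h * t` with `t` in a right transversal `T` of `φ.range` and returns `h`.
  obtain ⟨T, hT, hT1⟩ := φ.range.exists_isComplement_right 1
  have : Nonempty T := ⟨⟨1, hT1⟩⟩
  let e := MonoidHom.ofInjective hφ
  refine hK.of_surjective_of_map_mul_left φ (fun x => e.symm (hT.equiv x).1) ?_ fun h x => ?_
  · exact e.symm.surjective.comp <| Prod.fst_surjective.comp hT.equiv.surjective
  · rw [show φ h = ((e h : φ.range) : K) from rfl, hT.equiv_mul_left, map_mul,
      MulEquiv.symm_apply_apply]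

theorem of_le {Γ : Type*} [Group Γ] {H K : Subgroup Γ} (hK : IsAmenable K) (hHK : H ≤ K) :
    IsAmenable H :=
  hK.of_injective (Subgroup.inclusion hHK) (Subgroup.inclusion_injective hHK)

end IsAmenable

theorem Subgroup.exists_mul_eq_of_mem_sup_of_commute {Γ : Type*} [Group Γ] {H₁ H₂ : Subgroup Γ}
    (hcomm : ∀ h₁ ∈ H₁, ∀ h₂ ∈ H₂, h₁ * h₂ = h₂ * h₁) {x : Γ} (hx : x ∈ H₁ ⊔ H₂) :
    ∃ a ∈ H₁, ∃ b ∈ H₂, a * b = x := by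
  rw [← H₁.range_subtype, ← H₂.range_subtype,
    ← MonoidHom.noncommCoprod_range H₁.subtype H₂.subtype fun a b => hcomm a a.2 b b.2] at hx
  obtain ⟨⟨a, b⟩, rfl⟩ := hx
  exact ⟨a, a.2, b, b.2, rfl⟩

theorem Subgroup.exists_mem_not_isOfFinOrder_of_finiteIndex {Γ : Type*} [Group Γ]
    (G : Subgroup Γ) [G.FiniteIndex] {g : Γ} (hg : ¬IsOfFinOrder g) :
    ∃ x ∈ G, ¬IsOfFinOrder x := by
  obtain ⟨n, hn, -, hgn⟩ := G.exists_pow_mem_of_index_ne_zero Subgroup.FiniteIndex.index_ne_zero g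
  exact ⟨g ^ n, hgn, by simpa [isOfFinOrder_pow, hn.ne'] using hg⟩

theorem Commute.not_isOfFinOrder_or {Γ : Type*} [Group Γ] {a b : Γ} (hab : Commute a b)
    (h : ¬IsOfFinOrder (a * b)) : ¬IsOfFinOrder a ∨ ¬IsOfFinOrder b :=
  not_and_or.mp fun ⟨ha, hb⟩ => h (hab.isOfFinOrder_mul ha hb)

/-- If `Γ` contains an element of infinite order, the centraliser of
every infinite-order element of `Γ` is amenable, and `G` is a finite-index subgroup
of `Γ` generated by two elementwise-commuting subgroups `H₁`, `H₂`, then at least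
one of `H₁`, `H₂` is amenable. -/
theorem amenable_factor_of_finiteIndex_generated_by_commuting
    {Γ : Type*} [Group Γ]
    (hlarge : ∃ g : Γ, ¬ IsOfFinOrder g)
    (hcent : ∀ g : Γ, ¬ IsOfFinOrder g → IsAmenable (Subgroup.centralizer {g}))
    (G H₁ H₂ : Subgroup Γ) (hfi : G.FiniteIndex)
    (hgen : H₁ ⊔ H₂ = G)
    (hcomm : ∀ h₁ ∈ H₁, ∀ h₂ ∈ H₂, h₁ * h₂ = h₂ * h₁) :
    IsAmenable H₁ ∨ IsAmenable H₂ := by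
  obtain ⟨g, hg⟩ := hlarge
  obtain ⟨x, hxG, hx⟩ := G.exists_mem_not_isOfFinOrder_of_finiteIndex hg
  obtain ⟨a, ha, b, hb, rfl⟩ :=
    Subgroup.exists_mul_eq_of_mem_sup_of_commute hcomm (hgen ▸ hxG)
  rcases Commute.not_isOfFinOrder_or (hcomm a ha b hb) hx with ha_inf | hb_inf
  · exact .inr <| (hcent a ha_inf).of_le fun h hh =>
      Subgroup.mem_centralizer_singleton_iff.mpr (hcomm a ha h hh).symm
  · exact .inl <| (hcent b hb_inf).of_le fun h hh =>
      Subgroup.mem_centralizer_singleton_iff.mpr (hcomm h hh b hb)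
end

section
/- Let C be a class of groups that is closed under isomorphism, under taking subgroups, under taking quotients, and under finite (binary) products. Let G be a group such that for every element g ∈ G of infinite order the centraliser of g in G lies in C. If G is generated by two elementwise-commuting subgroups H₁ and H₂ (i.e., h₁h₂ = h₂h₁ for all h₁ ∈ H₁, h₂ ∈ H₂), each of which contains an element of infinite order, then G lies in C. -/
/-! Pick `a ∈ H₁` and `b ∈ H₂` of infinite order. Since the two subgroups commute elementwise,
`H₁ ≤ C_G(b)` and `H₂ ≤ C_G(a)`, so both lie in the class, hence so does `H₁ × H₂`; and `G` is a
quotient of `H₁ × H₂` through the multiplication map `(h₁, h₂) ↦ h₁ h₂`, which is a homomorphism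
precisely because `H₁` and `H₂` commute. -/

namespace Subgroup

variable {G : Type*} [Group G]

theorem le_centralizer_singleton_of_commute {H : Subgroup G} {g : G}
    (h : ∀ x ∈ H, x * g = g * x) : H ≤ centralizer {g} := fun x hx =>
  mem_centralizer_singleton_iff.mpr (h x hx)

theorem range_noncommCoprod_subtype (H₁ H₂ : Subgroup G)
    (comm : ∀ (x : H₁) (y : H₂), Commute (H₁.subtype x) (H₂.subtype y)) :
    (H₁.subtype.noncommCoprod H₂.subtype comm).range = H₁ ⊔ H₂ := by
  rw [MonoidHom.noncommCoprod_range, range_subtype, range_subtype]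

end Subgroup

universe u

section GroupClass

variable (C : (G : Type u) → [Group G] → Prop)

theorem mem_class_of_le
    (hiso : ∀ (G H : Type u) [Group G] [Group H], (G ≃* H) → C G → C H)
    (hsub : ∀ (G : Type u) [Group G] (H : Subgroup G), C G → C H)
    {G : Type u} [Group G] {H K : Subgroup G} (hHK : H ≤ K) (hK : C K) : C H :=
  hiso _ _ (Subgroup.subgroupOfEquivOfLe hHK) (hsub _ _ hK)

theorem mem_class_of_surjective
    (hiso : ∀ (G H : Type u) [Group G] [Group H], (G ≃* H) → C G → C H)
    (hquot : ∀ (G : Type u) [Group G] (N : Subgroup G) [N.Normal], C G → C (G ⧸ N))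
    {G H : Type u} [Group G] [Group H] (f : G →* H) (hf : Function.Surjective f) (hG : C G) :
    C H :=
  hiso _ _ (QuotientGroup.quotientKerEquivOfSurjective f hf) (hquot _ f.ker hG)

end GroupClass

/-- If `C` is a class of groups closed under isomorphism, subgroups,
quotients, and binary products, and `G` is a group whose centralisers of
infinite-order elements lie in `C`, and `G` is generated by two
elementwise-commuting subgroups `H₁`, `H₂`, each containing an element of
infinite order, then `G` lies in `C`. -/
theorem mem_class_of_generated_by_commuting_large_subgroups
    (C : (G : Type u) → [inst : Group G] → Prop)
    (hiso : ∀ (G H : Type u) [Group G] [Group H], (G ≃* H) → C G → C H)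
    (hsub : ∀ (G : Type u) [Group G] (H : Subgroup G), C G → C H)
    (hquot : ∀ (G : Type u) [Group G] (N : Subgroup G) [N.Normal], C G → C (G ⧸ N))
    (hprod : ∀ (G H : Type u) [Group G] [Group H], C G → C H → C (G × H))
    {G : Type u} [Group G]
    (hcent : ∀ g : G, ¬ IsOfFinOrder g → C (Subgroup.centralizer {g}))
    (H₁ H₂ : Subgroup G)
    (hgen : H₁ ⊔ H₂ = ⊤)
    (hcomm : ∀ h₁ ∈ H₁, ∀ h₂ ∈ H₂, h₁ * h₂ = h₂ * h₁)
    (h1 : ∃ h ∈ H₁, ¬ IsOfFinOrder h)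
    (h2 : ∃ h ∈ H₂, ¬ IsOfFinOrder h) :
    C G := by
  obtain ⟨a, haH₁, ha⟩ := h1
  obtain ⟨b, hbH₂, hb⟩ := h2
  have hC₁ : C H₁ := mem_class_of_le C hiso hsub
    (Subgroup.le_centralizer_singleton_of_commute fun x hx => hcomm x hx b hbH₂) (hcent b hb)
  have hC₂ : C H₂ := mem_class_of_le C hiso hsub
    (Subgroup.le_centralizer_singleton_of_commute fun x hx => (hcomm a haH₁ x hx).symm)
    (hcent a ha)
  have comm : ∀ (x : H₁) (y : H₂), Commute (H₁.subtype x) (H₂.subtype y) :=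
    fun x y => hcomm x x.2 y y.2
  refine mem_class_of_surjective C hiso hquot (H₁.subtype.noncommCoprod H₂.subtype comm) ?_
    (hprod _ _ hC₁ hC₂)
  rw [← MonoidHom.range_eq_top, Subgroup.range_noncommCoprod_subtype, hgen]
end
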